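/- With Q(v) = ψ·sign(v) (ψ > 0) and the biased-optimal scale S = ⟨Rx, Q(Rx)⟩/||Q(Rx)||_2^2, the normalized squared error equals 1 − ||Rx||_1^2/(d·||x||_2^2). In particular, since ||v||_1 ≤ √d·||v||_2, the error is always nonnegative, and since ||v||_1 ≥ ||v||_2 it is at most 1 − 1/d. -/

import Mathlib

/-!
Applying the isometry `R` to the error vector turns it into the residual of `Rx` after its best
multiple of `q = signVec (Rx)` (the factor `ψ` cancels in `S • Qv`), i.e. after orthogonal
projection onto the line through `q`, of squared norm `‖Rx‖² - ⟪Rx, q⟫² / ‖q‖²`. Here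
`⟪Rx, q⟫ = ‖Rx‖₁`, `‖q‖² = d` and `‖Rx‖ = ‖x‖`; the upper bound is `‖Rx‖₂ ≤ ‖Rx‖₁`.
-/

open Matrix RealInnerProductSpace

/-- The ±1 sign with the convention `sign 0 = +1`. -/
noncomputable def psign (y : ℝ) : ℝ := if 0 ≤ y then 1 else -1

/-- Coordinatewise sign vector. -/
noncomputable def signVec {d : ℕ} (v : EuclideanSpace ℝ (Fin d)) :
    EuclideanSpace ℝ (Fin d) := WithLp.toLp 2 (fun i => psign (v i))

lemma mul_psign_self (y : ℝ) : y * psign y = |y| := by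
  unfold psign
  split_ifs with h
  · rw [mul_one, abs_of_nonneg h]
  · rw [mul_neg_one, abs_of_neg (not_le.mp h)]

lemma abs_psign (y : ℝ) : |psign y| = 1 := by
  unfold psign
  split_ifs <;> norm_num

lemma inner_signVec_eq_sum_abs {d : ℕ} (v : EuclideanSpace ℝ (Fin d)) :
    ⟪v, signVec v⟫ = ∑ i, |v i| := by
  simp only [PiLp.inner_apply, RCLike.inner_apply, conj_trivial, signVec]
  exact Finset.sum_congr rfl fun i _ => by rw [mul_comm, mul_psign_self]

lemma norm_signVec_sq {d : ℕ} (v : EuclideanSpace ℝ (Fin d)) : ‖signVec v‖ ^ 2 = d := by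
  simp [EuclideanSpace.norm_sq_eq, signVec, abs_psign]

lemma norm_sq_le_sum_abs_sq {ι : Type*} [Fintype ι] (v : EuclideanSpace ℝ ι) :
    ‖v‖ ^ 2 ≤ (∑ i, |v i|) ^ 2 := by
  simpa only [EuclideanSpace.norm_sq_eq, Real.norm_eq_abs] using
    Finset.sum_sq_le_sq_sum_of_nonneg fun i _ => abs_nonneg (v i)

section OrthogonalMatrix

variable {n : Type*} [Fintype n] [DecidableEq n] {R : Matrix n n ℝ}

lemma toEuclideanLin_apply_toEuclideanLin_inv (hR : Rᵀ * R = 1) (w : EuclideanSpace ℝ n) :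
    toEuclideanLin R (toEuclideanLin R⁻¹ w) = w := by
  have hRinv : R * R⁻¹ = 1 := by
    rw [inv_eq_left_inv hR]
    exact mul_eq_one_comm.mp hR
  ext i
  simp only [toLpLin_apply, PiLp.toLp_apply, mulVec_mulVec, hRinv, one_mulVec]

lemma inner_toEuclideanLin_of_transpose_mul_self (hR : Rᵀ * R = 1) (u v : EuclideanSpace ℝ n) :
    ⟪toEuclideanLin R u, toEuclideanLin R v⟫ = ⟪u, v⟫ := by
  have hdot : (R *ᵥ ⇑u) ⬝ᵥ (R *ᵥ ⇑v) = (⇑u) ⬝ᵥ (⇑v) := by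
    rw [dotProduct_comm, dotProduct_mulVec, ← mulVec_transpose, mulVec_mulVec, hR, one_mulVec,
      dotProduct_comm]
  simpa [PiLp.inner_apply, dotProduct, mul_comm] using hdot

lemma norm_toEuclideanLin_of_transpose_mul_self (hR : Rᵀ * R = 1) (u : EuclideanSpace ℝ n) :
    ‖toEuclideanLin R u‖ = ‖u‖ := by
  rw [norm_eq_sqrt_real_inner, inner_toEuclideanLin_of_transpose_mul_self hR,
    ← norm_eq_sqrt_real_inner]

end OrthogonalMatrix

section Projection

variable {E : Type*} [NormedAddCommGroup E] [InnerProductSpace ℝ E]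

lemma norm_sub_inner_div_smul_sq (u q : E) :
    ‖u - (⟪u, q⟫ / ‖q‖ ^ 2) • q‖ ^ 2 = ‖u‖ ^ 2 - ⟪u, q⟫ ^ 2 / ‖q‖ ^ 2 := by
  rcases eq_or_ne q 0 with rfl | hq
  · simp
  have hq2 : ‖q‖ ^ 2 ≠ 0 := by positivity
  rw [norm_sub_sq_real, real_inner_smul_right, norm_smul, mul_pow, Real.norm_eq_abs, sq_abs]
  field_simp
  ring

lemma inner_sq_div_norm_sq_smul_right {c : ℝ} (hc : c ≠ 0) (u q : E) :
    ⟪u, c • q⟫ ^ 2 / ‖c • q‖ ^ 2 = ⟪u, q⟫ ^ 2 / ‖q‖ ^ 2 := by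
  rw [real_inner_smul_right, norm_smul, mul_pow, mul_pow, Real.norm_eq_abs, sq_abs,
    mul_div_mul_left _ _ (pow_ne_zero 2 hc)]

end Projection

theorem drive_two_level_biased_scale_vnmse_general (d : ℕ)
    (R : Matrix (Fin d) (Fin d) ℝ) (hR : Rᵀ * R = 1)
    (x : EuclideanSpace ℝ (Fin d)) (hx : x ≠ 0) (ψ : ℝ) (hψ : 0 < ψ) :
    let Rx := Matrix.toEuclideanLin R x
    let Qv : EuclideanSpace ℝ (Fin d) := ψ • signVec Rx
    let S : ℝ := ⟪Rx, Qv⟫ / ‖Qv‖ ^ 2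
    let nse : ℝ := ‖x - S • Matrix.toEuclideanLin R⁻¹ Qv‖ ^ 2 / ‖x‖ ^ 2
    nse = 1 - (∑ i : Fin d, |Rx i|) ^ 2 / (d * ‖x‖ ^ 2) ∧
      0 ≤ nse ∧ nse ≤ 1 - 1 / d := by
  intro Rx Qv S nse
  set s := ∑ i : Fin d, |Rx i|
  have hx2 : ‖x‖ ^ 2 ≠ 0 := by positivity
  have hnorm : ‖Rx‖ = ‖x‖ := norm_toEuclideanLin_of_transpose_mul_self hR x
  have herr : ‖x - S • toEuclideanLin R⁻¹ Qv‖ ^ 2 = ‖x‖ ^ 2 - s ^ 2 / d := by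
    rw [← norm_toEuclideanLin_of_transpose_mul_self hR, map_sub, map_smul,
      toEuclideanLin_apply_toEuclideanLin_inv hR, norm_sub_inner_div_smul_sq,
      inner_sq_div_norm_sq_smul_right hψ.ne', inner_signVec_eq_sum_abs, norm_signVec_sq, hnorm]
  have hnse : nse = 1 - s ^ 2 / (d * ‖x‖ ^ 2) := by
    simp only [nse, herr]
    field_simp
  refine ⟨hnse, by positivity, ?_⟩
  have hratio : 1 ≤ s ^ 2 / ‖x‖ ^ 2 :=
    (one_le_div (by positivity)).mpr (hnorm ▸ norm_sq_le_sum_abs_sq Rx)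
  calc nse = 1 - s ^ 2 / ‖x‖ ^ 2 / d := by rw [hnse, div_div, mul_comm]
    _ ≤ 1 - 1 / d := by gcongr

theorem drive_two_level_biased_scale_vnmse (d : ℕ) (hd : 0 < d)
    (R : Matrix (Fin d) (Fin d) ℝ) (hR : Rᵀ * R = 1)
    (x : EuclideanSpace ℝ (Fin d)) (hx : x ≠ 0) (ψ : ℝ) (hψ : 0 < ψ) :
    let Rx := Matrix.toEuclideanLin R x
    let Qv : EuclideanSpace ℝ (Fin d) := ψ • signVec Rx
    let S : ℝ := ⟪Rx, Qv⟫ / ‖Qv‖ ^ 2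
    let nse : ℝ := ‖x - S • Matrix.toEuclideanLin R⁻¹ Qv‖ ^ 2 / ‖x‖ ^ 2
    nse = 1 - (∑ i : Fin d, |Rx i|) ^ 2 / (d * ‖x‖ ^ 2) ∧
      0 ≤ nse ∧ nse ≤ 1 - 1 / d :=
  drive_two_level_biased_scale_vnmse_general d R hR x hx ψ hψ
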